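/- arXiv:2209.05670 — 3 statements merged into one kernel-verified Lean document; each statement's English description precedes it below -/
import Mathlib

section
/- Let R be a commutative ring, let t be a unit of R, and let s ∈ R satisfy s² = (1 − t)·s. Then the operation x ▷ y = t·x + s·y makes R into a rack; that is, for every y ∈ R the map x ↦ x ▷ y is a bijection of R, and (x ▷ y) ▷ z = (x ▷ z) ▷ (y ▷ z) for all x, y, z ∈ R. -/
/-! Right translation by `y` is the affine map `x ↦ t·x + s·y`, bijective because `t` is a unit.
Expanding both sides of self-distributivity, they differ by `((1 - t)·s - s²)·z`, which vanishes
by the hypothesis on `s`. -/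

def tsRackOp {R : Type*} [Mul R] [Add R] (t s x y : R) : R := t * x + s * y

theorem bijective_unit_mul_add {R : Type*} [Ring R] {t : R} (ht : IsUnit t) (c : R) :
    Function.Bijective (fun x : R => t * x + c) := by
  obtain ⟨u, rfl⟩ := ht
  exact (AddGroup.addRight_bijective c).comp u.mulLeft_bijective

theorem tsRackOp_left_bijective {R : Type*} [Ring R] {t : R} (s : R) (ht : IsUnit t) (y : R) :
    Function.Bijective (fun x : R => tsRackOp t s x y) :=
  bijective_unit_mul_add ht (s * y)

theorem tsRackOp_self_distrib {R : Type*} [CommRing R] {t s : R} (hs : s ^ 2 = (1 - t) * s)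
    (x y z : R) :
    tsRackOp t s (tsRackOp t s x y) z =
      tsRackOp t s (tsRackOp t s x z) (tsRackOp t s y z) := by
  unfold tsRackOp
  linear_combination (-z) * hs

/-- The `(t,s)`-rack operation `x ▷ y = t·x + s·y` on a commutative ring `R`, with `t`
a unit and `s² = (1 − t)·s`, makes `R` into a rack: each right translation is a
bijection and the operation is right self-distributive. -/
theorem ts_rack_axioms {R : Type*} [CommRing R] (t s : R) (ht : IsUnit t)
    (hs : s ^ 2 = (1 - t) * s) :
    (∀ y : R, Function.Bijective (fun x : R => t * x + s * y)) ∧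
    (∀ x y z : R,
      t * (t * x + s * y) + s * z = t * (t * x + s * z) + s * (t * y + s * z)) :=
  ⟨tsRackOp_left_bijective s ht, tsRackOp_self_distrib hs⟩
end

section
/- Let K = ℚ(t) be the field of rational functions over ℚ in the variable t. If x₁, …, x₄₅ ∈ K satisfy all 45 equations of the Alexander quandle coloring system of the Allen–Swenberg link with parameter t, then x₁ = x₂ = ⋯ = x₄₅. In other words, over the generic parameter t the solution space of this system is exactly the one-dimensional space of constant tuples. -/
/-!
Along a six-crossing twist region the two strands keep the difference `δ` of their colours
while both colours are translated by `3 (1 - t) δ`; the twelve-crossing tangle that follows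
each twist translates them back by the same amount, so each twist-and-tangle pair hands on the
colours it receives. The two pairs share the output arc `x₂₅`, so the crossings feeding them,
which have the common over-arc `x₆`, have the same output and hence (as `t ≠ 0`) the same
input. From there equal colours spread through the whole diagram, because at a crossing two
equal colours force the third when `t ≠ 0, 1`.
-/

section

variable {R : Type*} [CommRing R]

/-- At a crossing with over-arc coloured `c`, the under-arc coloured `b` continues as the arc
coloured `a = b ▷ c` of the Alexander quandle `x ▷ y = t x + (1 - t) y`. -/
def Crossing (t a b c : R) : Prop := a = t * b + (1 - t) * c

namespace Crossing

variable {t a b c : R}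

theorem self (t a : R) : Crossing t a a a := by
  unfold Crossing; ring

theorem out_unique {a' : R} (h : Crossing t a b c) (h' : Crossing t a' b c) : a = a' :=
  h.trans h'.symm

theorem out_eq_over (h : Crossing t a b c) (hb : b = c) : a = c :=
  h.out_unique (hb ▸ self t c)

variable [NoZeroDivisors R]

theorem in_unique {b' : R} (ht : t ≠ 0) (h : Crossing t a b c) (h' : Crossing t a b' c) :
    b = b' := by
  unfold Crossing at h h'
  have : t * (b - b') = 0 := by linear_combination h' - h
  simpa [ht, sub_eq_zero] using this

theorem in_eq_over (ht : t ≠ 0) (h : Crossing t a b c) (ha : a = c) : b = c :=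
  in_unique ht h (ha ▸ self t c)

theorem over_unique {c' : R} (ht : t ≠ 1) (h : Crossing t a b c) (h' : Crossing t a b c') :
    c = c' := by
  unfold Crossing at h h'
  have : (1 - t) * (c - c') = 0 := by linear_combination h' - h
  simpa [sub_ne_zero.mpr ht.symm, sub_eq_zero] using this

theorem over_eq_in (ht : t ≠ 1) (h : Crossing t a b c) (ha : a = b) : c = b :=
  over_unique ht h (ha ▸ self t b)

theorem sub_eq_sub_of_twist {c₀ c₁ c₂ c₃ : R} (ht : t ≠ 0)
    (h₁ : Crossing t c₂ c₀ c₁) (h₂ : Crossing t c₁ c₃ c₂) : c₃ - c₂ = c₁ - c₀ := by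
  unfold Crossing at h₁ h₂
  have : t * (c₃ - c₂ - (c₁ - c₀)) = 0 := by linear_combination -h₁ - h₂
  simpa [ht, sub_eq_zero] using this

end Crossing

def SixCrossingTwist (t c₀ c₁ c₂ c₃ c₄ c₅ c₆ c₇ : R) : Prop :=
  Crossing t c₂ c₀ c₁ ∧ Crossing t c₁ c₃ c₂ ∧ Crossing t c₄ c₂ c₃ ∧ Crossing t c₃ c₅ c₄ ∧
    Crossing t c₆ c₄ c₅ ∧ Crossing t c₅ c₇ c₆

def DoubledClasp (t a₀ a₁ b₀ b₁ b₂ b₃ c₀ c₁ c₂ c₃ d₀ d₁ e₀ e₁ : R) : Prop :=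
  Crossing t c₀ b₀ a₁ ∧ Crossing t c₃ b₀ a₀ ∧ Crossing t c₁ b₁ a₁ ∧ Crossing t c₂ b₁ a₀ ∧
    Crossing t a₁ b₂ c₂ ∧ Crossing t a₀ b₃ c₂ ∧ Crossing t c₁ b₂ c₃ ∧ Crossing t c₀ b₃ c₃ ∧
    Crossing t c₂ d₀ c₁ ∧ Crossing t c₃ d₁ c₁ ∧ Crossing t e₁ d₀ c₀ ∧ Crossing t e₀ d₁ c₀

variable {t a₀ a₁ b₀ b₁ b₂ b₃ c₀ c₁ c₂ c₃ c₄ c₅ c₆ c₇ d₀ d₁ e₀ e₁ : R}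

namespace DoubledClasp

theorem eq_sub (h : DoubledClasp t a₀ a₁ b₀ b₁ b₂ b₃ c₀ c₁ c₂ c₃ d₀ d₁ e₀ e₁) :
    e₀ = a₀ - 3 * ((1 - t) * (a₁ - a₀)) ∧ e₁ = a₁ - 3 * ((1 - t) * (a₁ - a₀)) := by
  obtain ⟨h₁, h₂, h₃, h₄, h₅, h₆, h₇, h₈, h₉, h₁₀, h₁₁, h₁₂⟩ := h
  unfold Crossing at *
  have hc : c₁ - c₀ = a₁ - a₀ := by linear_combination h₇ - h₈ - h₅ + h₆
  have hc' : c₂ - c₃ = a₁ - a₀ := by linear_combination h₄ - h₃ + h₁ - h₂ + hc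
  have he : e₁ - e₀ = c₂ - c₃ := by linear_combination h₁₁ - h₁₂ - h₉ + h₁₀
  have he₁ : e₁ = a₁ - 3 * ((1 - t) * (a₁ - a₀)) := by
    linear_combination h₁₁ - h₉ + h₄ - h₃ + h₇ - h₅ - (1 - t) * (hc' + hc)
  exact ⟨by linear_combination he₁ - he - hc', he₁⟩

theorem eq_of_eq [NoZeroDivisors R] (ht : t ≠ 0)
    (h : DoubledClasp t a₀ a₁ b₀ b₁ b₂ b₃ c₀ c₁ c₂ c₃ d₀ d₁ e₀ e₁) (ha : a₀ = a₁) :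
    b₀ = a₀ ∧ b₁ = a₀ ∧ b₂ = a₀ ∧ b₃ = a₀ ∧ c₀ = a₀ ∧ c₁ = a₀ ∧ c₂ = a₀ ∧ c₃ = a₀ ∧
      d₀ = a₀ ∧ d₁ = a₀ ∧ e₀ = a₀ ∧ e₁ = a₀ := by
  obtain ⟨h₁, h₂, h₃, h₄, h₅, h₆, h₇, h₈, h₉, h₁₀, h₁₁, h₁₂⟩ := h
  subst ha
  obtain rfl := h₁.out_unique h₂
  obtain rfl := Crossing.in_unique ht h₅ h₆
  obtain rfl := h₇.out_unique h₈
  obtain rfl := Crossing.in_unique ht h₃ h₁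
  obtain rfl := h₄.out_unique h₁
  obtain rfl := Crossing.in_eq_over ht h₇ rfl
  obtain rfl := h₅.out_eq_over rfl
  obtain rfl := Crossing.in_eq_over ht h₁ rfl
  obtain rfl := Crossing.in_eq_over ht h₉ rfl
  obtain rfl := Crossing.in_eq_over ht h₁₀ rfl
  obtain rfl := h₁₁.out_eq_over rfl
  obtain rfl := h₁₂.out_eq_over rfl
  exact ⟨rfl, rfl, rfl, rfl, rfl, rfl, rfl, rfl, rfl, rfl, rfl, rfl⟩

end DoubledClasp

namespace SixCrossingTwist

variable [NoZeroDivisors R]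

theorem eq_add (ht : t ≠ 0) (h : SixCrossingTwist t c₀ c₁ c₂ c₃ c₄ c₅ c₆ c₇) :
    c₆ = c₀ + 3 * ((1 - t) * (c₁ - c₀)) ∧ c₇ = c₁ + 3 * ((1 - t) * (c₁ - c₀)) := by
  obtain ⟨h₁, h₂, h₃, h₄, h₅, h₆⟩ := h
  have e₁ := Crossing.sub_eq_sub_of_twist ht h₁ h₂
  have e₂ := Crossing.sub_eq_sub_of_twist ht h₃ h₄
  have e₃ := Crossing.sub_eq_sub_of_twist ht h₅ h₆
  unfold Crossing at h₁ h₃ h₅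
  constructor
  · linear_combination h₁ + h₃ + h₅ + (1 - t) * (2 * e₁ + e₂)
  · linear_combination h₁ + h₃ + h₅ + (1 - t) * (2 * e₁ + e₂) + e₁ + e₂ + e₃

theorem eq_of_eq (ht : t ≠ 0) (h : SixCrossingTwist t c₀ c₁ c₂ c₃ c₄ c₅ c₆ c₇) (hc : c₀ = c₁) :
    c₂ = c₀ ∧ c₃ = c₀ ∧ c₄ = c₀ ∧ c₅ = c₀ ∧ c₆ = c₀ ∧ c₇ = c₀ := by
  obtain ⟨h₁, h₂, h₃, h₄, h₅, h₆⟩ := h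
  subst hc
  obtain rfl := h₁.out_eq_over rfl
  obtain rfl := Crossing.in_eq_over ht h₂ rfl
  obtain rfl := h₃.out_eq_over rfl
  obtain rfl := Crossing.in_eq_over ht h₄ rfl
  obtain rfl := h₅.out_eq_over rfl
  obtain rfl := Crossing.in_eq_over ht h₆ rfl
  exact ⟨rfl, rfl, rfl, rfl, rfl, rfl⟩

theorem doubledClasp_eq {m₀ m₁ m₂ m₃ : R} (ht : t ≠ 0)
    (hT : SixCrossingTwist t c₀ c₁ c₂ c₃ c₄ c₅ c₆ c₇)
    (hC : DoubledClasp t c₆ c₇ b₀ b₁ b₂ b₃ m₀ m₁ m₂ m₃ d₀ d₁ e₀ e₁) : e₀ = c₀ ∧ e₁ = c₁ := by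
  obtain ⟨h₆, h₇⟩ := hT.eq_add ht
  obtain ⟨he₀, he₁⟩ := hC.eq_sub
  constructor
  · linear_combination he₀ + (4 - 3 * t) * h₆ - 3 * (1 - t) * h₇
  · linear_combination he₁ + 3 * (1 - t) * h₆ + (3 * t - 2) * h₇

end SixCrossingTwist

theorem eq_of_fiveCrossings [NoZeroDivisors R] {x₁ x₂ x₃ x₄ x₅ y₀ y₁ : R}
    (ht₀ : t ≠ 0) (ht₁ : t ≠ 1)
    (h₁ : Crossing t x₂ x₁ y₀) (h₂ : Crossing t y₀ y₁ x₁) (h₃ : Crossing t x₁ x₂ x₃)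
    (h₄ : Crossing t x₃ x₄ x₁) (h₅ : Crossing t x₄ x₅ x₃) (hy : y₀ = y₁) :
    x₁ = y₀ ∧ x₂ = y₀ ∧ x₃ = y₀ ∧ x₄ = y₀ ∧ x₅ = y₀ := by
  subst hy
  obtain rfl := Crossing.over_eq_in ht₁ h₂ rfl
  obtain rfl := h₁.out_eq_over rfl
  obtain rfl := Crossing.over_eq_in ht₁ h₃ rfl
  obtain rfl := Crossing.in_eq_over ht₀ h₄ rfl
  obtain rfl := Crossing.in_eq_over ht₀ h₅ rfl
  exact ⟨rfl, rfl, rfl, rfl, rfl⟩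

end

theorem allen_swenberg_coloring_monochromatic_generic_general
    (x1 x2 x3 x4 x5 x6 x7 x8 x9 x10 x11 x12 x13 x14 x15 x16 x17 x18 x19 x20 x21 x22 x23 x24 x25 x26 x27 x28 x29 x30 x31 x32 x33 x34 x35 x36 x37 x38 x39 x40 x41 x42 x43 x44 x45 : RatFunc ℚ)
    (h1 : x2 = (RatFunc.X : RatFunc ℚ) * x1 + (1 - (RatFunc.X : RatFunc ℚ)) * x26)
    (h2 : x26 = (RatFunc.X : RatFunc ℚ) * x27 + (1 - (RatFunc.X : RatFunc ℚ)) * x1)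
    (h3 : x1 = (RatFunc.X : RatFunc ℚ) * x2 + (1 - (RatFunc.X : RatFunc ℚ)) * x3)
    (h4 : x3 = (RatFunc.X : RatFunc ℚ) * x4 + (1 - (RatFunc.X : RatFunc ℚ)) * x1)
    (h5 : x4 = (RatFunc.X : RatFunc ℚ) * x5 + (1 - (RatFunc.X : RatFunc ℚ)) * x3)
    (h7 : x8 = (RatFunc.X : RatFunc ℚ) * x7 + (1 - (RatFunc.X : RatFunc ℚ)) * x6)
    (h8 : x29 = (RatFunc.X : RatFunc ℚ) * x28 + (1 - (RatFunc.X : RatFunc ℚ)) * x6)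
    (h9 : x3 = (RatFunc.X : RatFunc ℚ) * x6 + (1 - (RatFunc.X : RatFunc ℚ)) * x28)
    (h10 : x9 = (RatFunc.X : RatFunc ℚ) * x8 + (1 - (RatFunc.X : RatFunc ℚ)) * x7)
    (h11 : x7 = (RatFunc.X : RatFunc ℚ) * x10 + (1 - (RatFunc.X : RatFunc ℚ)) * x9)
    (h12 : x11 = (RatFunc.X : RatFunc ℚ) * x9 + (1 - (RatFunc.X : RatFunc ℚ)) * x10)
    (h13 : x10 = (RatFunc.X : RatFunc ℚ) * x12 + (1 - (RatFunc.X : RatFunc ℚ)) * x11)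
    (h14 : x13 = (RatFunc.X : RatFunc ℚ) * x11 + (1 - (RatFunc.X : RatFunc ℚ)) * x12)
    (h15 : x12 = (RatFunc.X : RatFunc ℚ) * x14 + (1 - (RatFunc.X : RatFunc ℚ)) * x13)
    (h16 : x19 = (RatFunc.X : RatFunc ℚ) * x15 + (1 - (RatFunc.X : RatFunc ℚ)) * x14)
    (h17 : x22 = (RatFunc.X : RatFunc ℚ) * x15 + (1 - (RatFunc.X : RatFunc ℚ)) * x13)
    (h18 : x20 = (RatFunc.X : RatFunc ℚ) * x16 + (1 - (RatFunc.X : RatFunc ℚ)) * x14)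
    (h19 : x21 = (RatFunc.X : RatFunc ℚ) * x16 + (1 - (RatFunc.X : RatFunc ℚ)) * x13)
    (h20 : x14 = (RatFunc.X : RatFunc ℚ) * x17 + (1 - (RatFunc.X : RatFunc ℚ)) * x21)
    (h21 : x13 = (RatFunc.X : RatFunc ℚ) * x18 + (1 - (RatFunc.X : RatFunc ℚ)) * x21)
    (h22 : x20 = (RatFunc.X : RatFunc ℚ) * x17 + (1 - (RatFunc.X : RatFunc ℚ)) * x22)
    (h23 : x19 = (RatFunc.X : RatFunc ℚ) * x18 + (1 - (RatFunc.X : RatFunc ℚ)) * x22)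
    (h24 : x21 = (RatFunc.X : RatFunc ℚ) * x23 + (1 - (RatFunc.X : RatFunc ℚ)) * x20)
    (h25 : x22 = (RatFunc.X : RatFunc ℚ) * x24 + (1 - (RatFunc.X : RatFunc ℚ)) * x20)
    (h26 : x26 = (RatFunc.X : RatFunc ℚ) * x23 + (1 - (RatFunc.X : RatFunc ℚ)) * x19)
    (h27 : x25 = (RatFunc.X : RatFunc ℚ) * x24 + (1 - (RatFunc.X : RatFunc ℚ)) * x19)
    (h28 : x30 = (RatFunc.X : RatFunc ℚ) * x28 + (1 - (RatFunc.X : RatFunc ℚ)) * x29)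
    (h29 : x29 = (RatFunc.X : RatFunc ℚ) * x31 + (1 - (RatFunc.X : RatFunc ℚ)) * x30)
    (h30 : x32 = (RatFunc.X : RatFunc ℚ) * x30 + (1 - (RatFunc.X : RatFunc ℚ)) * x31)
    (h31 : x31 = (RatFunc.X : RatFunc ℚ) * x33 + (1 - (RatFunc.X : RatFunc ℚ)) * x32)
    (h32 : x34 = (RatFunc.X : RatFunc ℚ) * x32 + (1 - (RatFunc.X : RatFunc ℚ)) * x33)
    (h33 : x33 = (RatFunc.X : RatFunc ℚ) * x35 + (1 - (RatFunc.X : RatFunc ℚ)) * x34)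
    (h34 : x40 = (RatFunc.X : RatFunc ℚ) * x36 + (1 - (RatFunc.X : RatFunc ℚ)) * x35)
    (h35 : x38 = (RatFunc.X : RatFunc ℚ) * x36 + (1 - (RatFunc.X : RatFunc ℚ)) * x34)
    (h36 : x41 = (RatFunc.X : RatFunc ℚ) * x37 + (1 - (RatFunc.X : RatFunc ℚ)) * x35)
    (h37 : x39 = (RatFunc.X : RatFunc ℚ) * x37 + (1 - (RatFunc.X : RatFunc ℚ)) * x34)
    (h38 : x35 = (RatFunc.X : RatFunc ℚ) * x42 + (1 - (RatFunc.X : RatFunc ℚ)) * x39)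
    (h39 : x34 = (RatFunc.X : RatFunc ℚ) * x43 + (1 - (RatFunc.X : RatFunc ℚ)) * x39)
    (h40 : x41 = (RatFunc.X : RatFunc ℚ) * x42 + (1 - (RatFunc.X : RatFunc ℚ)) * x38)
    (h41 : x40 = (RatFunc.X : RatFunc ℚ) * x43 + (1 - (RatFunc.X : RatFunc ℚ)) * x38)
    (h42 : x25 = (RatFunc.X : RatFunc ℚ) * x44 + (1 - (RatFunc.X : RatFunc ℚ)) * x40)
    (h43 : x39 = (RatFunc.X : RatFunc ℚ) * x44 + (1 - (RatFunc.X : RatFunc ℚ)) * x41)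
    (h44 : x27 = (RatFunc.X : RatFunc ℚ) * x45 + (1 - (RatFunc.X : RatFunc ℚ)) * x40)
    (h45 : x38 = (RatFunc.X : RatFunc ℚ) * x45 + (1 - (RatFunc.X : RatFunc ℚ)) * x41)    : x1 = x2 ∧ x2 = x3 ∧ x3 = x4 ∧ x4 = x5 ∧ x5 = x6 ∧ x6 = x7 ∧ x7 = x8 ∧ x8 = x9 ∧ x9 = x10 ∧ x10 = x11 ∧ x11 = x12 ∧ x12 = x13 ∧ x13 = x14 ∧ x14 = x15 ∧ x15 = x16 ∧ x16 = x17 ∧ x17 = x18 ∧ x18 = x19 ∧ x19 = x20 ∧ x20 = x21 ∧ x21 = x22 ∧ x22 = x23 ∧ x23 = x24 ∧ x24 = x25 ∧ x25 = x26 ∧ x26 = x27 ∧ x27 = x28 ∧ x28 = x29 ∧ x29 = x30 ∧ x30 = x31 ∧ x31 = x32 ∧ x32 = x33 ∧ x33 = x34 ∧ x34 = x35 ∧ x35 = x36 ∧ x36 = x37 ∧ x37 = x38 ∧ x38 = x39 ∧ x39 = x40 ∧ x40 = x41 ∧ x41 = x42 ∧ x42 = x43 ∧ x43 = x44 ∧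 x44 = x45 := by
  have ht₀ : (RatFunc.X : RatFunc ℚ) ≠ 0 := RatFunc.X_ne_zero
  have ht₁ : (RatFunc.X : RatFunc ℚ) ≠ 1 := fun h => by
    simpa [h] using RatFunc.intDegree_X (K := ℚ)
  have hT : SixCrossingTwist RatFunc.X x8 x7 x9 x10 x11 x12 x13 x14 :=
    ⟨h10, h11, h12, h13, h14, h15⟩
  have hT' : SixCrossingTwist RatFunc.X x28 x29 x30 x31 x32 x33 x34 x35 :=
    ⟨h28, h29, h30, h31, h32, h33⟩
  have hC : DoubledClasp RatFunc.X x13 x14 x15 x16 x17 x18 x19 x20 x21 x22 x23 x24 x25 x26 :=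
    ⟨h16, h17, h18, h19, h20, h21, h22, h23, h24, h25, h26, h27⟩
  have hC' : DoubledClasp RatFunc.X x34 x35 x36 x37 x42 x43 x40 x41 x39 x38 x44 x45 x27 x25 :=
    ⟨h34, h35, h36, h37, h38, h39, h40, h41, h43, h45, h42, h44⟩
  obtain ⟨rfl, rfl⟩ := hT.doubledClasp_eq ht₀ hC
  obtain ⟨rfl, rfl⟩ := hT'.doubledClasp_eq ht₀ hC'
  obtain rfl := Crossing.in_unique ht₀ h7 h8
  obtain ⟨rfl, rfl, rfl, rfl, rfl⟩ := eq_of_fiveCrossings ht₀ ht₁ h1 h2 h3 h4 h5 rfl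
  obtain rfl := Crossing.in_eq_over ht₀ h9 rfl
  obtain rfl := Crossing.out_eq_over h7 rfl
  obtain ⟨rfl, rfl, rfl, rfl, rfl, rfl⟩ := hT.eq_of_eq ht₀ rfl
  obtain ⟨rfl, rfl, rfl, rfl, rfl, rfl⟩ := hT'.eq_of_eq ht₀ rfl
  obtain ⟨rfl, rfl, rfl, rfl, rfl, rfl, rfl, rfl, rfl, rfl, -, -⟩ := hC.eq_of_eq ht₀ rfl
  obtain ⟨rfl, rfl, rfl, rfl, rfl, rfl, rfl, rfl, rfl, rfl, -, -⟩ := hC'.eq_of_eq ht₀ rfl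
  simp

/-- Over the field `K = ℚ(t)` of rational functions with generic parameter `t = X`,
every solution of the Alexander quandle coloring system of the Allen–Swenberg link
is a constant tuple. -/
theorem allen_swenberg_coloring_monochromatic_generic
    (x1 x2 x3 x4 x5 x6 x7 x8 x9 x10 x11 x12 x13 x14 x15 x16 x17 x18 x19 x20 x21 x22 x23 x24 x25 x26 x27 x28 x29 x30 x31 x32 x33 x34 x35 x36 x37 x38 x39 x40 x41 x42 x43 x44 x45 : RatFunc ℚ)
    (h1 : x2 = (RatFunc.X : RatFunc ℚ) * x1 + (1 - (RatFunc.X : RatFunc ℚ)) * x26)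
    (h2 : x26 = (RatFunc.X : RatFunc ℚ) * x27 + (1 - (RatFunc.X : RatFunc ℚ)) * x1)
    (h3 : x1 = (RatFunc.X : RatFunc ℚ) * x2 + (1 - (RatFunc.X : RatFunc ℚ)) * x3)
    (h4 : x3 = (RatFunc.X : RatFunc ℚ) * x4 + (1 - (RatFunc.X : RatFunc ℚ)) * x1)
    (h5 : x4 = (RatFunc.X : RatFunc ℚ) * x5 + (1 - (RatFunc.X : RatFunc ℚ)) * x3)
    (h6 : x5 = (RatFunc.X : RatFunc ℚ) * x6 + (1 - (RatFunc.X : RatFunc ℚ)) * x7)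
    (h7 : x8 = (RatFunc.X : RatFunc ℚ) * x7 + (1 - (RatFunc.X : RatFunc ℚ)) * x6)
    (h8 : x29 = (RatFunc.X : RatFunc ℚ) * x28 + (1 - (RatFunc.X : RatFunc ℚ)) * x6)
    (h9 : x3 = (RatFunc.X : RatFunc ℚ) * x6 + (1 - (RatFunc.X : RatFunc ℚ)) * x28)
    (h10 : x9 = (RatFunc.X : RatFunc ℚ) * x8 + (1 - (RatFunc.X : RatFunc ℚ)) * x7)
    (h11 : x7 = (RatFunc.X : RatFunc ℚ) * x10 + (1 - (RatFunc.X : RatFunc ℚ)) * x9)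
    (h12 : x11 = (RatFunc.X : RatFunc ℚ) * x9 + (1 - (RatFunc.X : RatFunc ℚ)) * x10)
    (h13 : x10 = (RatFunc.X : RatFunc ℚ) * x12 + (1 - (RatFunc.X : RatFunc ℚ)) * x11)
    (h14 : x13 = (RatFunc.X : RatFunc ℚ) * x11 + (1 - (RatFunc.X : RatFunc ℚ)) * x12)
    (h15 : x12 = (RatFunc.X : RatFunc ℚ) * x14 + (1 - (RatFunc.X : RatFunc ℚ)) * x13)
    (h16 : x19 = (RatFunc.X : RatFunc ℚ) * x15 + (1 - (RatFunc.X : RatFunc ℚ)) * x14)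
    (h17 : x22 = (RatFunc.X : RatFunc ℚ) * x15 + (1 - (RatFunc.X : RatFunc ℚ)) * x13)
    (h18 : x20 = (RatFunc.X : RatFunc ℚ) * x16 + (1 - (RatFunc.X : RatFunc ℚ)) * x14)
    (h19 : x21 = (RatFunc.X : RatFunc ℚ) * x16 + (1 - (RatFunc.X : RatFunc ℚ)) * x13)
    (h20 : x14 = (RatFunc.X : RatFunc ℚ) * x17 + (1 - (RatFunc.X : RatFunc ℚ)) * x21)
    (h21 : x13 = (RatFunc.X : RatFunc ℚ) * x18 + (1 - (RatFunc.X : RatFunc ℚ)) * x21)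
    (h22 : x20 = (RatFunc.X : RatFunc ℚ) * x17 + (1 - (RatFunc.X : RatFunc ℚ)) * x22)
    (h23 : x19 = (RatFunc.X : RatFunc ℚ) * x18 + (1 - (RatFunc.X : RatFunc ℚ)) * x22)
    (h24 : x21 = (RatFunc.X : RatFunc ℚ) * x23 + (1 - (RatFunc.X : RatFunc ℚ)) * x20)
    (h25 : x22 = (RatFunc.X : RatFunc ℚ) * x24 + (1 - (RatFunc.X : RatFunc ℚ)) * x20)
    (h26 : x26 = (RatFunc.X : RatFunc ℚ) * x23 + (1 - (RatFunc.X : RatFunc ℚ)) * x19)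
    (h27 : x25 = (RatFunc.X : RatFunc ℚ) * x24 + (1 - (RatFunc.X : RatFunc ℚ)) * x19)
    (h28 : x30 = (RatFunc.X : RatFunc ℚ) * x28 + (1 - (RatFunc.X : RatFunc ℚ)) * x29)
    (h29 : x29 = (RatFunc.X : RatFunc ℚ) * x31 + (1 - (RatFunc.X : RatFunc ℚ)) * x30)
    (h30 : x32 = (RatFunc.X : RatFunc ℚ) * x30 + (1 - (RatFunc.X : RatFunc ℚ)) * x31)
    (h31 : x31 = (RatFunc.X : RatFunc ℚ) * x33 + (1 - (RatFunc.X : RatFunc ℚ)) * x32)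
    (h32 : x34 = (RatFunc.X : RatFunc ℚ) * x32 + (1 - (RatFunc.X : RatFunc ℚ)) * x33)
    (h33 : x33 = (RatFunc.X : RatFunc ℚ) * x35 + (1 - (RatFunc.X : RatFunc ℚ)) * x34)
    (h34 : x40 = (RatFunc.X : RatFunc ℚ) * x36 + (1 - (RatFunc.X : RatFunc ℚ)) * x35)
    (h35 : x38 = (RatFunc.X : RatFunc ℚ) * x36 + (1 - (RatFunc.X : RatFunc ℚ)) * x34)
    (h36 : x41 = (RatFunc.X : RatFunc ℚ) * x37 + (1 - (RatFunc.X : RatFunc ℚ)) * x35)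
    (h37 : x39 = (RatFunc.X : RatFunc ℚ) * x37 + (1 - (RatFunc.X : RatFunc ℚ)) * x34)
    (h38 : x35 = (RatFunc.X : RatFunc ℚ) * x42 + (1 - (RatFunc.X : RatFunc ℚ)) * x39)
    (h39 : x34 = (RatFunc.X : RatFunc ℚ) * x43 + (1 - (RatFunc.X : RatFunc ℚ)) * x39)
    (h40 : x41 = (RatFunc.X : RatFunc ℚ) * x42 + (1 - (RatFunc.X : RatFunc ℚ)) * x38)
    (h41 : x40 = (RatFunc.X : RatFunc ℚ) * x43 + (1 - (RatFunc.X : RatFunc ℚ)) * x38)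
    (h42 : x25 = (RatFunc.X : RatFunc ℚ) * x44 + (1 - (RatFunc.X : RatFunc ℚ)) * x40)
    (h43 : x39 = (RatFunc.X : RatFunc ℚ) * x44 + (1 - (RatFunc.X : RatFunc ℚ)) * x41)
    (h44 : x27 = (RatFunc.X : RatFunc ℚ) * x45 + (1 - (RatFunc.X : RatFunc ℚ)) * x40)
    (h45 : x38 = (RatFunc.X : RatFunc ℚ) * x45 + (1 - (RatFunc.X : RatFunc ℚ)) * x41)    : x1 = x2 ∧ x2 = x3 ∧ x3 = x4 ∧ x4 = x5 ∧ x5 = x6 ∧ x6 = x7 ∧ x7 = x8 ∧ x8 = x9 ∧ x9 = x10 ∧ x10 = x11 ∧ x11 = x12 ∧ x12 = x13 ∧ x13 = x14 ∧ x14 = x15 ∧ x15 = x16 ∧ x16 = x17 ∧ x17 = x18 ∧ x18 = x19 ∧ x19 = x20 ∧ x20 = x21 ∧ x21 = x22 ∧ x22 = x23 ∧ x23 = x24 ∧ x24 = x25 ∧ x25 = x26 ∧ x26 = x27 ∧ x27 = x28 ∧ x28 = x29 ∧ x29 = x30 ∧ x30 = x31 ∧ x31 = x32 ∧ x32 = x33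 ∧ x33 = x34 ∧ x34 = x35 ∧ x35 = x36 ∧ x36 = x37 ∧ x37 = x38 ∧ x38 = x39 ∧ x39 = x40 ∧ x40 = x41 ∧ x41 = x42 ∧ x42 = x43 ∧ x43 = x44 ∧ x44 = x45 :=
  allen_swenberg_coloring_monochromatic_generic_general x1 x2 x3 x4 x5 x6 x7 x8 x9 x10 x11 x12 x13
    x14 x15 x16 x17 x18 x19 x20 x21 x22 x23 x24 x25 x26 x27 x28 x29 x30 x31 x32 x33 x34 x35 x36 x37
    x38 x39 x40 x41 x42 x43 x44 x45 h1 h2 h3 h4 h5 h7 h8 h9 h10 h11 h12 h13 h14 h15 h16 h17 h18 h19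
    h20 h21 h22 h23 h24 h25 h26 h27 h28 h29 h30 h31 h32 h33 h34 h35 h36 h37 h38 h39 h40 h41 h42 h43
    h44 h45
end

section
/- Let n ≥ 1 and let t ∈ ℤ/nℤ be such that both t and t − 1 are units. Then the number of solutions over ℤ/nℤ of the Alexander quandle coloring system of the connected sum of two Hopf links equals the number of solutions over ℤ/nℤ of the Alexander quandle coloring system of the Allen–Swenberg link. Hence the Alexander quandle counting invariant cannot distinguish these two links. -/
/-!
When `t` and `t - 1` are units, both links admit only constant colorings, so both counts equal
the number of elements of `ℤ/nℤ`. For the Hopf sum this is immediate. The Allen–Swenberg diagram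
consists of a nine-crossing core, two regions of three full twists, and two tangles made of three
crossings of two-strand bands. A full twist shears a pair of colors `(a, b)` by adding
`(1 - t) * (b - a)` to both, while a band tangle subtracts `3 * (1 - t) * (b - a)`, so each twist
region followed by its band tangle passes its boundary colors through unchanged. The core then
forces all its colors to be equal, and equal boundary colors propagate through the twists and the
band tangles.
-/

/-- The Alexander quandle coloring system of the connected sum of two Hopf links over
a commutative ring `R` with parameter `t`, as a predicate on `x : Fin 4 → R`. -/
def HopfSumSystem {R : Type*} [CommRing R] (t : R) (x : Fin 4 → R) : Prop :=
  x 1 = t * x 2 + (1 - t) * x 0 ∧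
    x 2 = t * x 1 + (1 - t) * x 3 ∧
    x 0 = t * x 0 + (1 - t) * x 2 ∧
    x 3 = t * x 3 + (1 - t) * x 2

/-- The Alexander quandle coloring system of the Allen–Swenberg link over a
commutative ring `R` with parameter `t`, as a predicate on `x : Fin 45 → R`
(`x i` is the color of arc `xᵢ₊₁`). -/
def AllenSwenbergSystem {R : Type*} [CommRing R] (t : R) (x : Fin 45 → R) : Prop :=
  x 1 = t * x 0 + (1 - t) * x 25 ∧
    x 25 = t * x 26 + (1 - t) * x 0 ∧
    x 0 = t * x 1 + (1 - t) * x 2 ∧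
    x 2 = t * x 3 + (1 - t) * x 0 ∧
    x 3 = t * x 4 + (1 - t) * x 2 ∧
    x 4 = t * x 5 + (1 - t) * x 6 ∧
    x 7 = t * x 6 + (1 - t) * x 5 ∧
    x 28 = t * x 27 + (1 - t) * x 5 ∧
    x 2 = t * x 5 + (1 - t) * x 27 ∧
    x 8 = t * x 7 + (1 - t) * x 6 ∧
    x 6 = t * x 9 + (1 - t) * x 8 ∧
    x 10 = t * x 8 + (1 - t) * x 9 ∧
    x 9 = t * x 11 + (1 - t) * x 10 ∧
    x 12 = t * x 10 + (1 - t) * x 11 ∧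
    x 11 = t * x 13 + (1 - t) * x 12 ∧
    x 18 = t * x 14 + (1 - t) * x 13 ∧
    x 21 = t * x 14 + (1 - t) * x 12 ∧
    x 19 = t * x 15 + (1 - t) * x 13 ∧
    x 20 = t * x 15 + (1 - t) * x 12 ∧
    x 13 = t * x 16 + (1 - t) * x 20 ∧
    x 12 = t * x 17 + (1 - t) * x 20 ∧
    x 19 = t * x 16 + (1 - t) * x 21 ∧
    x 18 = t * x 17 + (1 - t) * x 21 ∧
    x 20 = t * x 22 + (1 - t) * x 19 ∧
    x 21 = t * x 23 + (1 - t) * x 19 ∧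
    x 25 = t * x 22 + (1 - t) * x 18 ∧
    x 24 = t * x 23 + (1 - t) * x 18 ∧
    x 29 = t * x 27 + (1 - t) * x 28 ∧
    x 28 = t * x 30 + (1 - t) * x 29 ∧
    x 31 = t * x 29 + (1 - t) * x 30 ∧
    x 30 = t * x 32 + (1 - t) * x 31 ∧
    x 33 = t * x 31 + (1 - t) * x 32 ∧
    x 32 = t * x 34 + (1 - t) * x 33 ∧
    x 39 = t * x 35 + (1 - t) * x 34 ∧
    x 37 = t * x 35 + (1 - t) * x 33 ∧
    x 40 = t * x 36 + (1 - t) * x 34 ∧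
    x 38 = t * x 36 + (1 - t) * x 33 ∧
    x 34 = t * x 41 + (1 - t) * x 38 ∧
    x 33 = t * x 42 + (1 - t) * x 38 ∧
    x 40 = t * x 41 + (1 - t) * x 37 ∧
    x 39 = t * x 42 + (1 - t) * x 37 ∧
    x 24 = t * x 43 + (1 - t) * x 39 ∧
    x 38 = t * x 43 + (1 - t) * x 40 ∧
    x 26 = t * x 44 + (1 - t) * x 39 ∧
    x 37 = t * x 44 + (1 - t) * x 40

section AlexanderColoring

variable {R : Type*} [CommRing R] {t : R}

theorem crossing_eq_of_eq {a b c e : R} (h : a = t * b + (1 - t) * c) (hb : b = e) (hc : c = e) :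
    a = e := by
  linear_combination h + t * hb + (1 - t) * hc

theorem crossing_under_eq_of_eq (ht : IsUnit t) {a b c e : R} (h : a = t * b + (1 - t) * c)
    (ha : a = e) (hc : c = e) : b = e :=
  ht.mul_left_cancel (by linear_combination ha - h - (1 - t) * hc)

theorem crossing_over_eq_of_eq (ht : IsUnit (t - 1)) {a b c e : R} (h : a = t * b + (1 - t) * c)
    (ha : a = e) (hb : b = e) : c = e :=
  ht.mul_left_cancel (by linear_combination h - ha + t * hb)

theorem full_twist (ht : IsUnit t) {a b c d : R}
    (h₁ : c = t * a + (1 - t) * b) (h₂ : b = t * d + (1 - t) * c) :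
    c = a + (1 - t) * (b - a) ∧ d = b + (1 - t) * (b - a) :=
  ⟨by linear_combination h₁,
    ht.mul_left_cancel (by linear_combination -h₂ - (1 - t) * h₁)⟩

theorem full_twist_eq_of_eq (ht : IsUnit t) {a b c d e : R}
    (h₁ : c = t * a + (1 - t) * b) (h₂ : b = t * d + (1 - t) * c) (ha : a = e) (hb : b = e) :
    c = e ∧ d = e :=
  have hc := crossing_eq_of_eq h₁ ha hb
  ⟨hc, crossing_under_eq_of_eq ht h₂ hb hc⟩

/-- Three crossings of two-strand bands, each band crossing being a block of four crossings:
the strands through `u₁, v₁` pass under the band `p, q`, those through `u₂, v₂` under the band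
`m₃, m₄`, and those through `u₃, v₃` under the band `m₂, m₁`. -/
def BandTangle (t p q u₁ v₁ u₂ v₂ m₁ m₂ m₃ m₄ u₃ v₃ p' q' : R) : Prop :=
  m₁ = t * u₁ + (1 - t) * q ∧ m₄ = t * u₁ + (1 - t) * p ∧
    m₂ = t * v₁ + (1 - t) * q ∧ m₃ = t * v₁ + (1 - t) * p ∧
    q = t * u₂ + (1 - t) * m₃ ∧ p = t * v₂ + (1 - t) * m₃ ∧
    m₂ = t * u₂ + (1 - t) * m₄ ∧ m₁ = t * v₂ + (1 - t) * m₄ ∧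
    m₃ = t * u₃ + (1 - t) * m₂ ∧ m₄ = t * v₃ + (1 - t) * m₂ ∧
    q' = t * u₃ + (1 - t) * m₁ ∧ p' = t * v₃ + (1 - t) * m₁

namespace BandTangle

variable {p q u₁ v₁ u₂ v₂ m₁ m₂ m₃ m₄ u₃ v₃ p' q' : R}

theorem sub_eq (h : BandTangle t p q u₁ v₁ u₂ v₂ m₁ m₂ m₃ m₄ u₃ v₃ p' q') :
    m₂ - m₁ = q - p ∧ m₃ - m₄ = q - p := by
  obtain ⟨h₁, h₂, h₃, h₄, h₅, h₆, h₇, h₈, -⟩ := h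
  have h₂₁ : m₂ - m₁ = q - p := by linear_combination h₇ - h₈ - h₅ + h₆
  exact ⟨h₂₁, by linear_combination h₄ - h₂ - h₃ + h₁ + h₂₁⟩

theorem shear (h : BandTangle t p q u₁ v₁ u₂ v₂ m₁ m₂ m₃ m₄ u₃ v₃ p' q') :
    p' = p - 3 * (1 - t) * (q - p) ∧ q' = q - 3 * (1 - t) * (q - p) := by
  obtain ⟨h₂₁, h₃₄⟩ := h.sub_eq
  obtain ⟨h₁, h₂, h₃, h₄, h₅, h₆, h₇, h₈, h₉, h₁₀, h₁₁, h₁₂⟩ := h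
  exact ⟨by linear_combination h₁₂ - h₁₀ + h₂ - h₁ + h₈ - h₆ - (1 - t) * (h₂₁ + h₃₄),
    by linear_combination h₁₁ - h₉ + h₄ - h₃ + h₇ - h₅ - (1 - t) * (h₂₁ + h₃₄)⟩

theorem untwist (ht : IsUnit t) {y₀ y₁ y₂ y₃ y₄ y₅ : R}
    (h₁ : y₂ = t * y₀ + (1 - t) * y₁) (h₂ : y₁ = t * y₃ + (1 - t) * y₂)
    (h₃ : y₄ = t * y₂ + (1 - t) * y₃) (h₄ : y₃ = t * y₅ + (1 - t) * y₄)
    (h₅ : p = t * y₄ + (1 - t) * y₅) (h₆ : y₅ = t * q + (1 - t) * p)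
    (h : BandTangle t p q u₁ v₁ u₂ v₂ m₁ m₂ m₃ m₄ u₃ v₃ p' q') : p' = y₀ ∧ q' = y₁ := by
  obtain ⟨e₂, e₃⟩ := full_twist ht h₁ h₂
  obtain ⟨e₄, e₅⟩ := full_twist ht h₃ h₄
  obtain ⟨e₆, e₇⟩ := full_twist ht h₅ h₆
  obtain ⟨hp', hq'⟩ := h.shear
  have hqp : q - p = y₁ - y₀ := by linear_combination e₇ - e₆ + e₅ - e₄ + e₃ - e₂
  constructor
  · linear_combination hp' + e₆ + e₄ + e₂ - (1 - t) * (3 * hqp - e₅ + e₄ - 2 * (e₃ - e₂))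
  · linear_combination hq' + e₇ + e₅ + e₃ - (1 - t) * (3 * hqp - e₅ + e₄ - 2 * (e₃ - e₂))

theorem eq_of_eq (ht : IsUnit t) {e : R}
    (h : BandTangle t p q u₁ v₁ u₂ v₂ m₁ m₂ m₃ m₄ u₃ v₃ p' q') (hp : p = e) (hq : q = e) :
    u₁ = e ∧ v₁ = e ∧ u₂ = e ∧ v₂ = e ∧ m₁ = e ∧ m₂ = e ∧ m₃ = e ∧ m₄ = e ∧
      u₃ = e ∧ v₃ = e ∧ p' = e ∧ q' = e := by
  obtain ⟨h₂₁, h₃₄⟩ := h.sub_eq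
  obtain ⟨hp', hq'⟩ := h.shear
  obtain ⟨h₁, h₂, h₃, h₄, h₅, h₆, h₇, h₈, h₉, h₁₀, h₁₁, h₁₂⟩ := h
  have hm₁ : m₁ = e := by linear_combination h₈ - h₆ + hp - (1 - t) * (h₃₄ + hq - hp)
  have hm₂ : m₂ = e := by linear_combination h₂₁ + hm₁ + hq - hp
  have hm₄ : m₄ = e := by linear_combination h₂ - h₁ + hm₁ + (1 - t) * (hp - hq)
  have hm₃ : m₃ = e := by linear_combination h₃₄ + hm₄ + hq - hp
  exact ⟨crossing_under_eq_of_eq ht h₁ hm₁ hq, crossing_under_eq_of_eq ht h₃ hm₂ hq,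
    crossing_under_eq_of_eq ht h₅ hq hm₃, crossing_under_eq_of_eq ht h₆ hp hm₃, hm₁, hm₂, hm₃,
    hm₄, crossing_under_eq_of_eq ht h₉ hm₃ hm₂, crossing_under_eq_of_eq ht h₁₀ hm₄ hm₂,
    by linear_combination hp' + hp - 3 * (1 - t) * (hq - hp),
    by linear_combination hq' + hq - 3 * (1 - t) * (hq - hp)⟩

end BandTangle

theorem HopfSumSystem.eq_const (ht1 : IsUnit (t - 1)) {x : Fin 4 → R} (hx : HopfSumSystem t x) :
    x = Function.const _ (x 0) := by
  obtain ⟨h₁, -, h₃, h₄⟩ := hx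
  have e₂ : x 2 = x 0 := crossing_over_eq_of_eq ht1 h₃ rfl rfl
  funext i
  fin_cases i
  exacts [rfl, crossing_eq_of_eq h₁ e₂ rfl, e₂,
    (crossing_over_eq_of_eq ht1 h₄ rfl rfl).symm.trans e₂]

theorem HopfSumSystem.const (c : R) : HopfSumSystem t (Function.const _ c) := by
  simp only [HopfSumSystem, Function.const_apply, ← add_mul, add_sub_cancel, one_mul, and_self]

theorem setOf_hopfSumSystem_eq_range_const (ht1 : IsUnit (t - 1)) :
    {x | HopfSumSystem t x} = Set.range (Function.const (Fin 4)) :=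
  Set.ext fun x ↦ ⟨fun hx ↦ ⟨x 0, (HopfSumSystem.eq_const ht1 hx).symm⟩,
    by rintro ⟨c, rfl⟩; exact HopfSumSystem.const c⟩

namespace AllenSwenbergSystem

variable {x : Fin 45 → R}

theorem skeleton_eq (ht : IsUnit t) (ht1 : IsUnit (t - 1)) (hx : AllenSwenbergSystem t x) :
    x 1 = x 0 ∧ x 2 = x 0 ∧ x 3 = x 0 ∧ x 4 = x 0 ∧ x 5 = x 0 ∧ x 6 = x 0 ∧ x 7 = x 0 ∧
      x 24 = x 0 ∧ x 25 = x 0 ∧ x 26 = x 0 ∧ x 27 = x 0 ∧ x 28 = x 0 := by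
  obtain ⟨c₁, c₂, c₃, c₄, c₅, -, c₇, c₈, c₉, c₁₀, c₁₁, c₁₂, c₁₃, c₁₄, c₁₅, a₁, a₂, a₃, a₄, a₅, a₆,
    a₇, a₈, a₉, a₁₀, a₁₁, a₁₂, c₂₈, c₂₉, c₃₀, c₃₁, c₃₂, c₃₃, b₁, b₂, b₃, b₄, b₅, b₆, b₇, b₈, b₁₁,
    b₉, b₁₂, b₁₀⟩ := hx
  obtain ⟨h₂₄, h₂₅⟩ := BandTangle.untwist ht c₁₀ c₁₁ c₁₂ c₁₃ c₁₄ c₁₅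
    ⟨a₁, a₂, a₃, a₄, a₅, a₆, a₇, a₈, a₉, a₁₀, a₁₁, a₁₂⟩
  obtain ⟨h₂₆, h₂₄'⟩ := BandTangle.untwist ht c₂₈ c₂₉ c₃₀ c₃₁ c₃₂ c₃₃
    ⟨b₁, b₂, b₃, b₄, b₅, b₆, b₇, b₈, b₉, b₁₀, b₁₁, b₁₂⟩
  have e₆₂₇ : x 6 = x 27 := ht.mul_left_cancel (by linear_combination h₂₄' - h₂₄ - c₇ + c₈)
  have e₆ : x 6 = x 0 :=
    (crossing_over_eq_of_eq ht1 c₂ h₂₅ (h₂₆.trans e₆₂₇.symm)).symm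
  have e₁ : x 1 = x 0 := crossing_eq_of_eq c₁ rfl (h₂₅.trans e₆)
  have e₂ : x 2 = x 0 := crossing_over_eq_of_eq ht1 c₃ rfl e₁
  have e₂₇ : x 27 = x 0 := e₆₂₇.symm.trans e₆
  have e₅ : x 5 = x 0 := crossing_under_eq_of_eq ht c₉ e₂ e₂₇
  have e₇ : x 7 = x 0 := crossing_eq_of_eq c₇ e₆ e₅
  have e₃ : x 3 = x 0 := crossing_under_eq_of_eq ht c₄ e₂ rfl
  exact ⟨e₁, e₂, e₃, crossing_under_eq_of_eq ht c₅ e₃ e₂, e₅, e₆, e₇, h₂₄.trans e₇,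
    h₂₅.trans e₆, h₂₆.trans e₂₇, e₂₇, h₂₄'.symm.trans (h₂₄.trans e₇)⟩

theorem eq_const (ht : IsUnit t) (ht1 : IsUnit (t - 1)) (hx : AllenSwenbergSystem t x) :
    x = Function.const _ (x 0) := by
  obtain ⟨e₁, e₂, e₃, e₄, e₅, e₆, e₇, e₂₄, e₂₅, e₂₆, e₂₇, e₂₈⟩ := skeleton_eq ht ht1 hx
  obtain ⟨-, -, -, -, -, -, -, -, -, c₁₀, c₁₁, c₁₂, c₁₃, c₁₄, c₁₅, a₁, a₂, a₃, a₄, a₅, a₆, a₇, a₈,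
    a₉, a₁₀, a₁₁, a₁₂, c₂₈, c₂₉, c₃₀, c₃₁, c₃₂, c₃₃, b₁, b₂, b₃, b₄, b₅, b₆, b₇, b₈, b₁₁, b₉, b₁₂,
    b₁₀⟩ := hx
  obtain ⟨e₈, e₉⟩ := full_twist_eq_of_eq ht c₁₀ c₁₁ e₇ e₆
  obtain ⟨e₁₀, e₁₁⟩ := full_twist_eq_of_eq ht c₁₂ c₁₃ e₈ e₉
  obtain ⟨e₁₂, e₁₃⟩ := full_twist_eq_of_eq ht c₁₄ c₁₅ e₁₀ e₁₁
  obtain ⟨e₂₉, e₃₀⟩ := full_twist_eq_of_eq ht c₂₈ c₂₉ e₂₇ e₂₈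
  obtain ⟨e₃₁, e₃₂⟩ := full_twist_eq_of_eq ht c₃₀ c₃₁ e₂₉ e₃₀
  obtain ⟨e₃₃, e₃₄⟩ := full_twist_eq_of_eq ht c₃₂ c₃₃ e₃₁ e₃₂
  obtain ⟨e₁₄, e₁₅, e₁₆, e₁₇, e₁₈, e₁₉, e₂₀, e₂₁, e₂₂, e₂₃, -⟩ := BandTangle.eq_of_eq ht
    ⟨a₁, a₂, a₃, a₄, a₅, a₆, a₇, a₈, a₉, a₁₀, a₁₁, a₁₂⟩ e₁₂ e₁₃
  obtain ⟨e₃₅, e₃₆, e₄₁, e₄₂, e₃₉, e₄₀, e₃₈, e₃₇, e₄₃, e₄₄, -⟩ := BandTangle.eq_of_eq ht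
    ⟨b₁, b₂, b₃, b₄, b₅, b₆, b₇, b₈, b₉, b₁₀, b₁₁, b₁₂⟩ e₃₃ e₃₄
  funext i
  fin_cases i
  exacts [rfl, e₁, e₂, e₃, e₄, e₅, e₆, e₇, e₈, e₉, e₁₀, e₁₁, e₁₂, e₁₃, e₁₄, e₁₅, e₁₆, e₁₇, e₁₈,
    e₁₉, e₂₀, e₂₁, e₂₂, e₂₃, e₂₄, e₂₅, e₂₆, e₂₇, e₂₈, e₂₉, e₃₀, e₃₁, e₃₂, e₃₃, e₃₄, e₃₅, e₃₆, e₃₇,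
    e₃₈, e₃₉, e₄₀, e₄₁, e₄₂, e₄₃, e₄₄]

theorem const (c : R) : AllenSwenbergSystem t (Function.const _ c) := by
  simp only [AllenSwenbergSystem, Function.const_apply, ← add_mul, add_sub_cancel, one_mul,
    and_self]

end AllenSwenbergSystem

theorem setOf_allenSwenbergSystem_eq_range_const (ht : IsUnit t) (ht1 : IsUnit (t - 1)) :
    {x | AllenSwenbergSystem t x} = Set.range (Function.const (Fin 45)) :=
  Set.ext fun x ↦ ⟨fun hx ↦ ⟨x 0, (AllenSwenbergSystem.eq_const ht ht1 hx).symm⟩,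
    by rintro ⟨c, rfl⟩; exact AllenSwenbergSystem.const c⟩

end AlexanderColoring

theorem hopf_sum_allen_swenberg_same_count_general (n : ℕ) (t : ZMod n)
    (ht : IsUnit t) (ht1 : IsUnit (t - 1)) :
    {x : Fin 4 → ZMod n | HopfSumSystem t x}.ncard =
      {x : Fin 45 → ZMod n | AllenSwenbergSystem t x}.ncard := by
  rw [setOf_hopfSumSystem_eq_range_const ht1, setOf_allenSwenbergSystem_eq_range_const ht ht1,
    Set.ncard_range_of_injective Function.const_injective,
    Set.ncard_range_of_injective Function.const_injective]

/-- Over `ℤ/nℤ` with `n ≥ 1` and both `t` and `t − 1` units, the Alexander quandle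
counting invariants of the connected sum of two Hopf links and of the Allen–Swenberg
link coincide; hence the Alexander quandle cannot distinguish these two links. -/
theorem hopf_sum_allen_swenberg_same_count (n : ℕ) (hn : 1 ≤ n) (t : ZMod n)
    (ht : IsUnit t) (ht1 : IsUnit (t - 1)) :
    {x : Fin 4 → ZMod n | HopfSumSystem t x}.ncard =
      {x : Fin 45 → ZMod n | AllenSwenbergSystem t x}.ncard :=
  hopf_sum_allen_swenberg_same_count_general n t ht ht1
end
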